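/- arXiv:1508.03337 — 4 statements merged into one kernel-verified Lean document; each statement's English description precedes it below -/
import Mathlib

section
/- If x̃ ∈ ℝⁿ satisfies ‖x̃‖₁ ≤ √k and the sparsification probabilities are pᵢ = min{s|x̃ᵢ|/‖x̃‖₁, 1}, then Σᵢ (1/pᵢ - 1) x̃ᵢ² ≤ k/s. -/
theorem stmt3 (n : ℕ) (x : Fin n → ℝ) (hx : x ≠ 0) (k s : ℝ) (hs : 0 < s)
    (hk : ∑ i, |x i| ≤ Real.sqrt k)
    (p : Fin n → ℝ) (hp : ∀ i, p i = min (s * |x i| / (∑ j, |x j|)) 1) :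
    ∑ i, (1 / p i - 1) * (x i) ^ 2 ≤ k / s := by
  set L := ∑ j, |x j| with hL
  have hLpos : 0 < L := by
    obtain ⟨i, hi⟩ := Function.ne_iff.mp hx
    exact Finset.sum_pos' (fun j _ => abs_nonneg _)
      ⟨i, Finset.mem_univ i, abs_pos.mpr hi⟩
  have hbound : ∀ i, (1 / p i - 1) * (x i) ^ 2 ≤ |x i| * L / s := by
    intro i
    have hrhs : 0 ≤ |x i| * L / s :=
      div_nonneg (mul_nonneg (abs_nonneg _) hLpos.le) hs.le
    rcases eq_or_ne (x i) 0 with h0 | h0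
    · simp [h0, hrhs]
    · have habs : 0 < |x i| := abs_pos.mpr h0
      rcases le_or_gt 1 (s * |x i| / L) with hcase | hcase
      · have : p i = 1 := by rw [hp i, min_eq_right hcase]
        simp [this, hrhs]
      · have hpi : p i = s * |x i| / L := by rw [hp i, min_eq_left hcase.le]
        have hsx : 0 < s * |x i| := mul_pos hs habs
        have hpix : 0 < p i := by rw [hpi]; positivity
        have h1 : 1 / p i - 1 ≤ L / (s * |x i|) := by
          rw [hpi, one_div_div]
          linarith
        have hx2 : (x i) ^ 2 = |x i| ^ 2 := (sq_abs _).symm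
        calc (1 / p i - 1) * (x i) ^ 2 ≤ (L / (s * |x i|)) * (x i) ^ 2 := by
              apply mul_le_mul_of_nonneg_right h1 (sq_nonneg _)
          _ = |x i| * L / s := by
              field_simp; rw [hx2]
    
  calc ∑ i, (1 / p i - 1) * (x i) ^ 2 ≤ ∑ i, |x i| * L / s :=
        Finset.sum_le_sum fun i _ => hbound i
    _ = L * L / s := by rw [← Finset.sum_div, ← Finset.sum_mul]
    _ ≤ k / s := by
        gcongr
        have hk0 : 0 ≤ k := by
          by_contra h
          push_neg at h
          have : Real.sqrt k = 0 := Real.sqrt_eq_zero_of_nonpos h.le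
          linarith [hk, hLpos]
        nlinarith [Real.sq_sqrt hk0, hLpos, hk]
end

section
/- With probability at least 3/4, the sparsified vector satisfies ‖x̂‖₂ ≤ 1 + 2√(k/s). -/
open MeasureTheory
open scoped Classical ENNReal

/-!
Coordinatewise, `x̂ᵢ² ≤ xᵢ² + (L/s)|x̂ᵢ|` with `L = ‖x‖₁`: a kept coordinate with `pᵢ < 1` has
`|x̂ᵢ| = L/s` exactly. Hence `‖x̂‖₂² ≤ 1 + (L/s)‖x̂‖₁`. Since `𝔼 |x̂ᵢ| ≤ |xᵢ|`, Markov's inequality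
gives `‖x̂‖₁ ≤ 4L` with probability at least `3/4`, and then `‖x̂‖₂² ≤ 1 + 4L²/s ≤ 1 + 4k/s`.
-/

theorem abs_div_mul_le_abs (a : ℝ) {p : ℝ} (hp : 0 ≤ p) : |a / p| * p ≤ |a| := by
  rcases hp.eq_or_lt with rfl | hp
  · simp
  · rw [abs_div, abs_of_pos hp, div_mul_cancel₀ _ hp.ne']

theorem sq_div_min_le (a : ℝ) {t : ℝ} (ht : 0 ≤ t) :
    (a / min (|a| / t) 1) ^ 2 ≤ a ^ 2 + t * |a / min (|a| / t) 1| := by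
  rcases le_total 1 (|a| / t) with h | h
  · rw [min_eq_right h, div_one]
    nlinarith [abs_nonneg a]
  · rw [min_eq_left h]
    suffices |a / (|a| / t)| ≤ t by nlinarith [sq_abs (a / (|a| / t)), abs_nonneg (a / (|a| / t))]
    rcases eq_or_ne a 0 with rfl | ha
    · simpa using ht
    · rcases ht.eq_or_lt with rfl | ht
      · simp
      · rw [abs_div, abs_div, abs_abs, abs_of_pos ht, div_div_cancel₀ (abs_pos.mpr ha).ne']

theorem sqrt_sum_sq_le_one_add_two_sqrt_div {ι : Type*} [Fintype ι] {x y : ι → ℝ}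
    {k s L : ℝ} (hs : 0 < s) (hL : 0 ≤ L) (hLk : L ≤ Real.sqrt k)
    (hx : Real.sqrt (∑ i, x i ^ 2) ≤ 1) (hy : ∀ i, y i ^ 2 ≤ x i ^ 2 + L / s * |y i|)
    (hy₁ : ∑ i, |y i| ≤ 4 * L) :
    Real.sqrt (∑ i, y i ^ 2) ≤ 1 + 2 * Real.sqrt (k / s) := by
  rw [Real.sqrt_le_one] at hx
  have hLks : L / Real.sqrt s ≤ Real.sqrt (k / s) := by
    rw [Real.sqrt_div' k hs.le]
    gcongr
  refine Real.sqrt_le_iff.mpr ⟨by positivity, ?_⟩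
  calc ∑ i, y i ^ 2 ≤ ∑ i, (x i ^ 2 + L / s * |y i|) := Finset.sum_le_sum fun i _ => hy i
    _ = ∑ i, x i ^ 2 + L / s * ∑ i, |y i| := by rw [Finset.sum_add_distrib, Finset.mul_sum]
    _ ≤ 1 + L / s * (4 * L) := by gcongr
    _ = 1 + 4 * (L / Real.sqrt s) ^ 2 := by
      rw [div_pow, Real.sq_sqrt hs.le]
      ring
    _ ≤ (1 + 2 * Real.sqrt (k / s)) ^ 2 := by
      nlinarith [Real.sqrt_nonneg (k / s), pow_le_pow_left₀ (by positivity) hLks 2]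

theorem one_sub_inv_le_measure_le_mul_of_lintegral_le {Ω : Type*} [MeasurableSpace Ω]
    {μ : Measure Ω} [IsProbabilityMeasure μ] {f : Ω → ℝ≥0∞} (hf : Measurable f)
    {c r : ℝ≥0∞} (hfc : ∫⁻ ω, f ω ∂μ ≤ c) (hc : c ≠ ∞) (hr₀ : r ≠ 0) (hr : r ≠ ∞) :
    1 - r⁻¹ ≤ μ {ω | f ω ≤ r * c} := by
  have hcompl : {ω | f ω ≤ r * c} = {ω | r * c < f ω}ᶜ := by ext; simp
  rw [hcompl, prob_compl_eq_one_sub (measurableSet_lt measurable_const hf)]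
  gcongr
  rcases eq_or_ne c 0 with rfl | hc₀
  · have hf0 : f =ᵐ[μ] 0 := (lintegral_eq_zero_iff hf).mp (le_zero_iff.mp hfc)
    have hnull : μ {ω | r * 0 < f ω} = 0 :=
      measure_mono_null (fun ω (hω : r * 0 < f ω) => (mul_zero r ▸ hω).ne') (ae_iff.mp hf0)
    rw [hnull]
    exact zero_le
  · calc μ {ω | r * c < f ω} ≤ μ {ω | r * c ≤ f ω} :=
          measure_mono fun _ hω => le_of_lt (α := ℝ≥0∞) hω
      _ ≤ (∫⁻ ω, f ω ∂μ) / (r * c) :=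
        meas_ge_le_lintegral_div hf.aemeasurable (mul_ne_zero hr₀ hc₀) (ENNReal.mul_ne_top hr hc)
      _ ≤ c / (r * c) := by gcongr
      _ = r⁻¹ := by
        rw [← one_mul c, ← mul_assoc, mul_one, ENNReal.mul_div_mul_right 1 r hc₀ hc, one_div]

theorem three_div_four_eq_one_sub_inv_four : (3 / 4 : ℝ≥0∞) = 1 - 4⁻¹ := by
  refine ENNReal.eq_sub_of_add_eq (by simp) ?_
  rw [ENNReal.div_eq_inv_mul, ← mul_add_one, show (3 : ℝ≥0∞) + 1 = 4 by norm_num]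
  exact ENNReal.inv_mul_cancel (by norm_num) (by norm_num)

section Sparsification

variable {ι Ω : Type*} {E : ι → Set Ω} {x p : ι → ℝ}

noncomputable def sparsify (E : ι → Set Ω) (x p : ι → ℝ) (ω : Ω) (i : ι) : ℝ :=
  if ω ∈ E i then x i / p i else 0

theorem sq_sparsify_le {t : ℝ} (ht : 0 ≤ t) {i : ι} (hp : p i = min (|x i| / t) 1) (ω : Ω) :
    sparsify E x p ω i ^ 2 ≤ x i ^ 2 + t * |sparsify E x p ω i| := by
  unfold sparsify
  split_ifs
  · rw [hp]
    exact sq_div_min_le _ ht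
  · simpa using sq_nonneg (x i)

theorem ofReal_abs_sparsify_eq_indicator (i : ι) :
    (fun ω => ENNReal.ofReal |sparsify E x p ω i|) =
      (E i).indicator fun _ => ENNReal.ofReal |x i / p i| := by
  ext ω
  by_cases hω : ω ∈ E i <;> simp [sparsify, hω]

variable [Fintype ι] [MeasurableSpace Ω]

theorem measurable_sum_ofReal_abs_sparsify (hE : ∀ i, MeasurableSet (E i)) :
    Measurable fun ω => ∑ i, ENNReal.ofReal |sparsify E x p ω i| := by
  refine Finset.measurable_sum _ fun i _ => ?_
  rw [ofReal_abs_sparsify_eq_indicator]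
  exact measurable_const.indicator (hE i)

theorem lintegral_sum_ofReal_abs_sparsify_le (μ : Measure Ω) (hE : ∀ i, MeasurableSet (E i))
    (hp : ∀ i, 0 ≤ p i) (hμE : ∀ i, μ (E i) = ENNReal.ofReal (p i)) :
    ∫⁻ ω, ∑ i, ENNReal.ofReal |sparsify E x p ω i| ∂μ ≤ ENNReal.ofReal (∑ i, |x i|) := by
  rw [lintegral_finsetSum _ fun i _ => ?_, ENNReal.ofReal_sum_of_nonneg fun i _ => abs_nonneg _]
  · refine Finset.sum_le_sum fun i _ => ?_
    rw [ofReal_abs_sparsify_eq_indicator, lintegral_indicator_const (hE i), hμE,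
      ← ENNReal.ofReal_mul (abs_nonneg _)]
    exact ENNReal.ofReal_le_ofReal (abs_div_mul_le_abs _ (hp i))
  · rw [ofReal_abs_sparsify_eq_indicator]
    exact measurable_const.indicator (hE i)

end Sparsification

theorem stmt5_general {Ω : Type*} [MeasurableSpace Ω] (μ : Measure Ω) [IsProbabilityMeasure μ]
    (n : ℕ) (k s : ℝ) (hs : 0 < s) (x : Fin n → ℝ)
    (hx2 : Real.sqrt (∑ i, (x i) ^ 2) ≤ 1)
    (hk : ∑ i, |x i| ≤ Real.sqrt k)
    (p : Fin n → ℝ) (hp : ∀ i, p i = min (s * |x i| / (∑ j, |x j|)) 1)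
    (E : Fin n → Set Ω) (hE : ∀ i, MeasurableSet (E i))
    (hμE : ∀ i, μ (E i) = ENNReal.ofReal (p i))
    (xhat : Ω → Fin n → ℝ)
    (hxhat : ∀ ω i, xhat ω i = if ω ∈ E i then x i / p i else 0) :
    (3 / 4 : ENNReal) ≤
      μ {ω | Real.sqrt (∑ i, (xhat ω i) ^ 2) ≤ 1 + 2 * Real.sqrt (k / s)} := by
  obtain rfl : xhat = sparsify E x p := funext₂ hxhat
  set L := ∑ j, |x j|
  have hL : 0 ≤ L := by positivity
  have hp₀ : ∀ i, 0 ≤ p i := fun i => by rw [hp]; positivity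
  have hpt : ∀ i, p i = min (|x i| / (L / s)) 1 := fun i => by
    rw [hp, div_div_eq_mul_div, mul_comm]
  have hgood : {ω | ∑ i, ENNReal.ofReal |sparsify E x p ω i| ≤ 4 * ENNReal.ofReal L} ⊆
      {ω | Real.sqrt (∑ i, sparsify E x p ω i ^ 2) ≤ 1 + 2 * Real.sqrt (k / s)} := by
    intro ω hω
    rw [Set.mem_ofPred_eq, ← ENNReal.ofReal_sum_of_nonneg fun i _ => abs_nonneg _,
      ← ENNReal.ofReal_ofNat 4, ← ENNReal.ofReal_mul (by norm_num),
      ENNReal.ofReal_le_ofReal_iff (by positivity)] at hω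
    exact sqrt_sum_sq_le_one_add_two_sqrt_div hs hL hk hx2
      (fun i => sq_sparsify_le (by positivity) (hpt i) ω) hω
  calc (3 / 4 : ℝ≥0∞) = 1 - 4⁻¹ := three_div_four_eq_one_sub_inv_four
    _ ≤ μ {ω | ∑ i, ENNReal.ofReal |sparsify E x p ω i| ≤ 4 * ENNReal.ofReal L} :=
      one_sub_inv_le_measure_le_mul_of_lintegral_le (measurable_sum_ofReal_abs_sparsify hE)
        (lintegral_sum_ofReal_abs_sparsify_le μ hE hp₀ hμE) ENNReal.ofReal_ne_top
        (by norm_num) (by norm_num)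
    _ ≤ _ := measure_mono hgood

theorem stmt5 {Ω : Type*} [MeasurableSpace Ω] (μ : Measure Ω) [IsProbabilityMeasure μ]
    (n : ℕ) (k s : ℝ) (hs : 0 < s) (x : Fin n → ℝ)
    (hx2 : Real.sqrt (∑ i, (x i) ^ 2) ≤ 1)
    (hk : ∑ i, |x i| ≤ Real.sqrt k)
    (p : Fin n → ℝ) (hp : ∀ i, p i = min (s * |x i| / (∑ j, |x j|)) 1)
    (E : Fin n → Set Ω) (hE : ∀ i, MeasurableSet (E i))
    (hμE : ∀ i, μ (E i) = ENNReal.ofReal (p i))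
    (hind : ProbabilityTheory.iIndepSet E μ)
    (xhat : Ω → Fin n → ℝ)
    (hxhat : ∀ ω i, xhat ω i = if ω ∈ E i then x i / p i else 0) :
    (3 / 4 : ENNReal) ≤
      μ {ω | Real.sqrt (∑ i, (xhat ω i) ^ 2) ≤ 1 + 2 * Real.sqrt (k / s)} :=
  stmt5_general μ n k s hs x hx2 hk p hp E hE hμE xhat hxhat
end

section
/- If all entries of A satisfy |A_{ij}| ≤ 1, ‖x̃‖₂ ≤ 1 and ‖x̃‖₁ ≤ √k, and x̂ is the random sparsification of x̃ with parameter s, then E[((x̃ - x̂)ᵀA(x̃ - x̂))²] ≤ 3k²/s² + k²/s³ + 6√k/s. -/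
/-!
Write `y = x̃ - x̂`. Its coordinates are independent and centred, with
`E y_i² = x_i² (1 - p_i) / p_i ≤ |x_i| ‖x̃‖₁ / s` and
`E y_i⁴ ≤ x_i⁴ (1 - p_i) / p_i³ ≤ |x_i| ‖x̃‖₁³ / s³`.
Expanding `(yᵀ A y)² = ∑ A_ij A_kl y_i y_j y_k y_l`, a mixed moment `E[y_i y_j y_k y_l]` vanishes
unless the four indices pair up, so with `|A_ij| ≤ 1` the expectation is at most
`∑ E y_i⁴ + 3 (∑ E y_i²)² ≤ ‖x̃‖₁⁴ / s³ + 3 ‖x̃‖₁⁴ / s² ≤ k² / s³ + 3 k² / s²`.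
-/

open Matrix
open scoped Classical

open MeasureTheory ProbabilityTheory Finset

section MixedMoments

variable {ι : Type*} [Fintype ι] [DecidableEq ι]

theorem mul_mul_mul_eq_prod_pow_count {R : Type*} [CommMonoid R] (v : ι → R) (i j k l : ι) :
    v i * v j * v k * v l = ∏ m, v m ^ Multiset.count m {i, j, k, l} := by
  rw [← prod_subset (subset_univ ({i, j, k, l} : Multiset ι).toFinset)]
  · rw [← prod_multiset_map_count]
    simp [mul_assoc]
  · intro m _ hm
    rw [Multiset.count_eq_zero_of_notMem (by simpa using hm), pow_zero]

/-- The value of `E[y_i y_j y_k y_l]` for independent centred `y` with `E[y_m ^ r] = M r m`. -/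
def fourthMixedMoment {R : Type*} [Mul R] [Zero R] (M : ℕ → ι → R) (i j k l : ι) : R :=
  if i = j ∧ j = k ∧ k = l then M 4 i
  else if i = j ∧ k = l then M 2 i * M 2 k
  else if i = k ∧ j = l then M 2 i * M 2 j
  else if i = l ∧ j = k then M 2 i * M 2 j
  else 0

theorem prod_count_eq_fourthMixedMoment {R : Type*} [CommMonoidWithZero R] (M : ℕ → ι → R)
    (h0 : ∀ i, M 0 i = 1) (h1 : ∀ i, M 1 i = 0) (i j k l : ι) :
    ∏ m, M (Multiset.count m {i, j, k, l}) m = fourthMixedMoment M i j k l := by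
  unfold fourthMixedMoment
  split_ifs with hall hij hik hil
  · obtain ⟨rfl, rfl, rfl⟩ := hall
    rw [Fintype.prod_eq_single i fun m hm => by simp [hm, h0]]
    simp
  · obtain ⟨rfl, rfl⟩ := hij
    have hik : i ≠ k := by tauto
    rw [Fintype.prod_eq_mul i k hik fun m hm => by simp [hm, h0]]
    simp [hik, hik.symm]
  · obtain ⟨rfl, rfl⟩ := hik
    have hij : i ≠ j := by tauto
    rw [Fintype.prod_eq_mul i j hij fun m hm => by simp [hm, h0]]
    simp [hij, hij.symm]
  · obtain ⟨rfl, rfl⟩ := hil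
    have hij : i ≠ j := by tauto
    rw [Fintype.prod_eq_mul i j hij fun m hm => by simp [hm, h0]]
    simp [hij, hij.symm]
  · obtain ⟨m, -, hm⟩ : ∃ m ∈ [i, j, k, l], Multiset.count m {i, j, k, l} = 1 := by
      simp only [List.mem_cons, List.not_mem_nil, exists_eq_or_imp, Multiset.insert_eq_cons,
        Multiset.count_cons, Multiset.count_singleton]
      grind
    exact prod_eq_zero (mem_univ m) (by rw [hm, h1])

omit [Fintype ι] in
theorem fourthMixedMoment_nonneg (M : ℕ → ι → ℝ) (h2 : ∀ i, 0 ≤ M 2 i) (h4 : ∀ i, 0 ≤ M 4 i)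
    (i j k l : ι) : 0 ≤ fourthMixedMoment M i j k l := by
  unfold fourthMixedMoment
  split_ifs <;> first | exact h4 i | exact le_rfl | exact mul_nonneg (h2 _) (h2 _)

theorem sum_fourthMixedMoment_le (M : ℕ → ι → ℝ) (h2 : ∀ i, 0 ≤ M 2 i) :
    ∑ i, ∑ j, ∑ k, ∑ l, fourthMixedMoment M i j k l ≤ ∑ i, M 4 i + 3 * (∑ i, M 2 i) ^ 2 := by
  calc ∑ i, ∑ j, ∑ k, ∑ l, fourthMixedMoment M i j k l
      ≤ ∑ i, ∑ j, ∑ k, ∑ l, ((if i = j ∧ j = k ∧ k = l then M 4 i else 0) +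
          (if i = j ∧ k = l then M 2 i * M 2 k else 0) +
          (if i = k ∧ j = l then M 2 i * M 2 j else 0) +
          (if i = l ∧ j = k then M 2 i * M 2 j else 0)) := by
        gcongr with i _ j _ k _ l _
        unfold fourthMixedMoment
        split_ifs <;> linarith [mul_nonneg (h2 i) (h2 j), mul_nonneg (h2 i) (h2 k)]
    _ = ∑ i, M 4 i + 3 * (∑ i, M 2 i) ^ 2 := by
        rw [sq, sum_mul_sum]
        simp only [ite_and, sum_add_distrib, sum_ite_irrel, sum_ite_eq, mem_univ, ↓reduceIte,
          sum_const_zero]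
        ring

omit [DecidableEq ι] in
theorem sq_dotProduct_mulVec {R : Type*} [CommSemiring R] (A : Matrix ι ι R) (v : ι → R) :
    (v ⬝ᵥ A *ᵥ v) ^ 2 = ∑ i, ∑ j, ∑ k, ∑ l, A i j * A k l * (v i * v j * v k * v l) := by
  have hquad : v ⬝ᵥ A *ᵥ v = ∑ i, ∑ j, A i j * (v i * v j) := by
    simp only [dotProduct, mulVec, mul_sum]
    exact sum_congr rfl fun i _ => sum_congr rfl fun j _ => by ring
  simp only [hquad, sq, sum_mul, mul_sum]
  exact sum_congr rfl fun i _ => sum_congr rfl fun j _ => sum_congr rfl fun k _ =>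
    sum_congr rfl fun l _ => by ring

end MixedMoments

section Probability

variable {Ω : Type*} [MeasurableSpace Ω] {μ : Measure Ω}

theorem MeasureTheory.MemLp.integrable_mul_mul_mul {f g h k : Ω → ℝ} (hf : MemLp f 4 μ)
    (hg : MemLp g 4 μ) (hh : MemLp h 4 μ) (hk : MemLp k 4 μ) :
    Integrable (fun ω => f ω * g ω * h ω * k ω) μ := by
  have : ENNReal.HolderTriple 4 4 2 := ⟨by
    rw [← two_mul, show (4 : ENNReal) = 2 * 2 by norm_num, ENNReal.mul_inv (by simp) (by simp),
      ← mul_assoc, ENNReal.mul_inv_cancel (by simp) (by simp), one_mul]⟩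
  have := (hg.mul' hf : MemLp (fun ω => f ω * g ω) 2 μ).integrable_mul
    (hk.mul' hh : MemLp (fun ω => h ω * k ω) 2 μ)
  simpa only [Pi.mul_def, mul_assoc] using this

theorem integral_ite_mem [IsProbabilityMeasure μ] {E : Set Ω} [DecidablePred (· ∈ E)]
    (hE : MeasurableSet E) (a b : ℝ) :
    ∫ ω, (if ω ∈ E then a else b) ∂μ = μ.real E * a + (1 - μ.real E) * b := by
  have := integral_piecewise (μ := μ) hE (integrableOn_const (C := a))
    (integrableOn_const (C := b))
  simpa [Set.piecewise, setIntegral_const, probReal_compl_eq_one_sub hE] using this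

theorem ProbabilityTheory.iIndepSet.iIndepFun_ite {ι : Type*} {E : ι → Set Ω}
    [∀ i, DecidablePred (· ∈ E i)] (hE : iIndepSet E μ) (a b : ι → ℝ) :
    iIndepFun (fun i ω => if ω ∈ E i then a i else b i) μ := by
  have := (hE.iIndepFun_indicator (β := ℝ)).comp (fun i t => b i + t * (a i - b i))
    fun i => by fun_prop
  convert this using 2 with i
  ext ω
  by_cases h : ω ∈ E i <;> simp [h]

variable {ι : Type*} [Fintype ι] [DecidableEq ι] {y : ι → Ω → ℝ}

theorem ProbabilityTheory.iIndepFun.integral_mul_mul_mul [IsProbabilityMeasure μ]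
    (hind : iIndepFun y μ) (hy : ∀ i, AEMeasurable (y i) μ) (hmean : ∀ i, ∫ ω, y i ω ∂μ = 0)
    (i j k l : ι) :
    ∫ ω, y i ω * y j ω * y k ω * y l ω ∂μ =
      fourthMixedMoment (fun r m => ∫ ω, y m ω ^ r ∂μ) i j k l := by
  refine (integral_congr_ae (ae_of_all _ fun ω =>
    mul_mul_mul_eq_prod_pow_count (y · ω) i j k l)).trans ?_
  rw [hind.integral_fun_prod_comp hy fun m => (continuous_pow _).aestronglyMeasurable]
  exact prod_count_eq_fourthMixedMoment (fun r m => ∫ ω, y m ω ^ r ∂μ) (fun _ => by simp)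
    (fun i => by simpa using hmean i) i j k l

theorem ProbabilityTheory.iIndepFun.integral_sq_dotProduct_mulVec_le [IsProbabilityMeasure μ]
    (hind : iIndepFun y μ) (hy : ∀ i, MemLp (y i) 4 μ) (hmean : ∀ i, ∫ ω, y i ω ∂μ = 0)
    (A : Matrix ι ι ℝ) (hA : ∀ i j, |A i j| ≤ 1) :
    ∫ ω, ((fun i => y i ω) ⬝ᵥ A *ᵥ fun i => y i ω) ^ 2 ∂μ ≤
      ∑ i, ∫ ω, y i ω ^ 4 ∂μ + 3 * (∑ i, ∫ ω, y i ω ^ 2 ∂μ) ^ 2 := by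
  set M : ℕ → ι → ℝ := fun r i => ∫ ω, y i ω ^ r ∂μ
  have hM_nonneg (r : ℕ) (hr : Even r) (i : ι) : 0 ≤ M r i :=
    integral_nonneg fun ω => hr.pow_nonneg _
  have hint (i j k l : ι) : Integrable (fun ω => y i ω * y j ω * y k ω * y l ω) μ :=
    (hy i).integrable_mul_mul_mul (hy j) (hy k) (hy l)
  calc ∫ ω, ((fun i => y i ω) ⬝ᵥ A *ᵥ fun i => y i ω) ^ 2 ∂μ
      = ∑ i, ∑ j, ∑ k, ∑ l, A i j * A k l * fourthMixedMoment M i j k l := by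
        simp (disch := fun_prop) only [sq_dotProduct_mulVec, integral_finsetSum,
          integral_const_mul, hind.integral_mul_mul_mul (fun i => (hy i).aemeasurable) hmean, M]
    _ ≤ ∑ i, ∑ j, ∑ k, ∑ l, fourthMixedMoment M i j k l := by
        gcongr with i _ j _ k _ l _
        refine mul_le_of_le_one_left (fourthMixedMoment_nonneg M (hM_nonneg 2 even_two)
          (hM_nonneg 4 (by decide)) i j k l) ?_
        calc A i j * A k l ≤ |A i j| * |A k l| := (le_abs_self _).trans (abs_mul _ _).le
          _ ≤ 1 := mul_le_one₀ (hA i j) (abs_nonneg _) (hA k l)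
    _ ≤ _ := sum_fourthMixedMoment_le M (hM_nonneg 2 even_two)

end Probability

theorem one_sub_min_one_div_pow_le {q : ℝ} (hq : 0 < q) (n : ℕ) :
    (1 - min q 1) / min q 1 ^ n ≤ 1 / q ^ n := by
  rcases le_total q 1 with h | h
  · rw [min_eq_left h]
    gcongr
    linarith
  · rw [min_eq_right h]
    simp only [sub_self, zero_div]
    positivity

/-- `p * (x - x / p) ^ r + (1 - p) * x ^ r` is `E[(x - x̂) ^ r]` for `x̂ = x / p` with probability
`p` and `x̂ = 0` otherwise. -/
theorem sparsify_moments {x L s p : ℝ} (hs : 0 < s) (hxL : |x| ≤ L)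
    (hp : p = min (s * |x| / L) 1) :
    p * (x - x / p) + (1 - p) * x = 0 ∧
      p * (x - x / p) ^ 2 + (1 - p) * x ^ 2 ≤ |x| * L / s ∧
      p * (x - x / p) ^ 4 + (1 - p) * x ^ 4 ≤ |x| * L ^ 3 / s ^ 3 := by
  rcases eq_or_ne x 0 with rfl | hx
  · simp
  have hx' : 0 < |x| := abs_pos.2 hx
  have hq : 0 < s * |x| / L := by have := hx'.trans_le hxL; positivity
  have hp0 : 0 < p := hp ▸ lt_min hq one_pos
  have hp1 : p ≤ 1 := hp ▸ min_le_right _ _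
  have hfrac (n : ℕ) : (1 - p) / p ^ n ≤ (L / (s * |x|)) ^ n := by
    convert hp ▸ one_sub_min_one_div_pow_le hq n using 1
    rw [one_div, ← inv_pow, inv_div]
  refine ⟨by field_simp; ring, ?_, ?_⟩
  · calc p * (x - x / p) ^ 2 + (1 - p) * x ^ 2 = |x| ^ 2 * ((1 - p) / p ^ 1) := by
          rw [sq_abs]; field_simp; ring
      _ ≤ |x| ^ 2 * (L / (s * |x|)) ^ 1 := by gcongr; exact hfrac 1
      _ = |x| * L / s := by field_simp
  · calc p * (x - x / p) ^ 4 + (1 - p) * x ^ 4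
          = |x| ^ 4 * ((1 - p) / p ^ 3) * (1 - 3 * p * (1 - p)) := by
          rw [show |x| ^ 4 = x ^ 4 by rw [show 4 = 2 * 2 by rfl, pow_mul, sq_abs, ← pow_mul]]
          field_simp; ring
      _ ≤ |x| ^ 4 * ((1 - p) / p ^ 3) := by
          refine mul_le_of_le_one_right (by have := hfrac 3; positivity) ?_
          nlinarith
      _ ≤ |x| ^ 4 * (L / (s * |x|)) ^ 3 := by gcongr; exact hfrac 3
      _ = |x| * L ^ 3 / s ^ 3 := by field_simp

theorem pow_four_le_sq_of_le_sqrt {L k : ℝ} (hL : 0 ≤ L) (hLk : L ≤ Real.sqrt k) :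
    L ^ 4 ≤ k ^ 2 := by
  have hL2 : L ^ 2 ≤ |k| :=
    (Real.le_sqrt hL (abs_nonneg k)).1 (hLk.trans (Real.sqrt_le_sqrt (le_abs_self k)))
  calc L ^ 4 = (L ^ 2) ^ 2 := by ring
    _ ≤ |k| ^ 2 := by gcongr
    _ = k ^ 2 := sq_abs k

theorem sum_add_three_mul_sq_le {ι : Type*} [Fintype ι] {x M₂ M₄ : ι → ℝ} {k s : ℝ}
    (hs : 0 < s) (hk : ∑ i, |x i| ≤ Real.sqrt k) (hM₂_nonneg : ∀ i, 0 ≤ M₂ i)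
    (hM₂ : ∀ i, M₂ i ≤ |x i| * (∑ j, |x j|) / s)
    (hM₄ : ∀ i, M₄ i ≤ |x i| * (∑ j, |x j|) ^ 3 / s ^ 3) :
    ∑ i, M₄ i + 3 * (∑ i, M₂ i) ^ 2 ≤ k ^ 2 / s ^ 3 + 3 * k ^ 2 / s ^ 2 := by
  set L := ∑ j, |x j|
  have hL4 : L ^ 4 ≤ k ^ 2 := pow_four_le_sq_of_le_sqrt (by positivity) hk
  calc ∑ i, M₄ i + 3 * (∑ i, M₂ i) ^ 2
      ≤ ∑ i, |x i| * L ^ 3 / s ^ 3 + 3 * (∑ i, |x i| * L / s) ^ 2 := by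
        gcongr with i _ j _
        · exact hM₄ i
        · exact sum_nonneg fun i _ => hM₂_nonneg i
        · exact hM₂ j
    _ = L ^ 4 / s ^ 3 + 3 * L ^ 4 / s ^ 2 := by
        simp only [← sum_div, ← sum_mul]
        ring
    _ ≤ k ^ 2 / s ^ 3 + 3 * k ^ 2 / s ^ 2 := by gcongr

theorem stmt13_general {Ω : Type*} [MeasurableSpace Ω] (μ : Measure Ω) [IsProbabilityMeasure μ]
    (n : ℕ) (A : Matrix (Fin n) (Fin n) ℝ)
    (hentries : ∀ i j, |A i j| ≤ 1)
    (k s : ℝ) (hs : 0 < s) (x : Fin n → ℝ)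
    (hk : ∑ i, |x i| ≤ Real.sqrt k)
    (p : Fin n → ℝ) (hp : ∀ i, p i = min (s * |x i| / (∑ j, |x j|)) 1)
    (E : Fin n → Set Ω) (hE : ∀ i, MeasurableSet (E i))
    (hμE : ∀ i, μ (E i) = ENNReal.ofReal (p i))
    (hind : ProbabilityTheory.iIndepSet E μ)
    (xhat : Ω → Fin n → ℝ)
    (hxhat : ∀ ω i, xhat ω i = if ω ∈ E i then x i / p i else 0) :
    (∫ ω, ((fun i => x i - xhat ω i) ⬝ᵥ A.mulVec (fun i => x i - xhat ω i)) ^ 2 ∂μ) ≤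
      3 * k ^ 2 / s ^ 2 + k ^ 2 / s ^ 3 + 6 * Real.sqrt k / s := by
  set y : Fin n → Ω → ℝ := fun i ω => if ω ∈ E i then x i - x i / p i else x i
  have hy (ω : Ω) : (fun i => x i - xhat ω i) = fun i => y i ω := by
    ext i
    by_cases h : ω ∈ E i <;> simp [y, hxhat, h]
  have hmoment (i : Fin n) (r : ℕ) :
      ∫ ω, y i ω ^ r ∂μ = p i * (x i - x i / p i) ^ r + (1 - p i) * x i ^ r := by
    have hpE : μ.real (E i) = p i := by
      rw [measureReal_def, hμE, ENNReal.toReal_ofReal (hp i ▸ by positivity)]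
    simp only [y, ite_pow]
    rw [integral_ite_mem (hE i), hpE]
  have hsparse (i : Fin n) := sparsify_moments hs (single_le_sum (f := fun j => |x j|)
    (fun j _ => abs_nonneg _) (mem_univ i)) (hp i)
  simp_rw [hy]
  calc ∫ ω, ((fun i => y i ω) ⬝ᵥ A *ᵥ fun i => y i ω) ^ 2 ∂μ
      ≤ ∑ i, ∫ ω, y i ω ^ 4 ∂μ + 3 * (∑ i, ∫ ω, y i ω ^ 2 ∂μ) ^ 2 :=
        (hind.iIndepFun_ite (fun i => x i - x i / p i) x).integral_sq_dotProduct_mulVec_le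
          (fun i => (memLp_const _).piecewise (hE i) (memLp_const _))
          (fun i => by simpa [← (hsparse i).1] using hmoment i 1) A hentries
    _ ≤ k ^ 2 / s ^ 3 + 3 * k ^ 2 / s ^ 2 :=
        sum_add_three_mul_sq_le hs hk (fun i => integral_nonneg fun ω => sq_nonneg (y i ω))
          (fun i => hmoment i 2 ▸ (hsparse i).2.1) (fun i => hmoment i 4 ▸ (hsparse i).2.2)
    _ ≤ 3 * k ^ 2 / s ^ 2 + k ^ 2 / s ^ 3 + 6 * Real.sqrt k / s := by
        linarith [show 0 ≤ 6 * Real.sqrt k / s by positivity]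

theorem stmt13 {Ω : Type*} [MeasurableSpace Ω] (μ : Measure Ω) [IsProbabilityMeasure μ]
    (n : ℕ) (A : Matrix (Fin n) (Fin n) ℝ) (hA : A.PosSemidef)
    (hentries : ∀ i j, |A i j| ≤ 1)
    (k s : ℝ) (hs : 0 < s) (x : Fin n → ℝ)
    (hx2 : Real.sqrt (∑ i, (x i) ^ 2) ≤ 1)
    (hk : ∑ i, |x i| ≤ Real.sqrt k)
    (p : Fin n → ℝ) (hp : ∀ i, p i = min (s * |x i| / (∑ j, |x j|)) 1)
    (E : Fin n → Set Ω) (hE : ∀ i, MeasurableSet (E i))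
    (hμE : ∀ i, μ (E i) = ENNReal.ofReal (p i))
    (hind : ProbabilityTheory.iIndepSet E μ)
    (xhat : Ω → Fin n → ℝ)
    (hxhat : ∀ ω i, xhat ω i = if ω ∈ E i then x i / p i else 0) :
    (∫ ω, ((fun i => x i - xhat ω i) ⬝ᵥ A.mulVec (fun i => x i - xhat ω i)) ^ 2 ∂μ) ≤
      3 * k ^ 2 / s ^ 2 + k ^ 2 / s ^ 3 + 6 * Real.sqrt k / s :=
  stmt13_general μ n A hentries k s hs x hk p hp E hE hμE hind xhat hxhat
end

section
/- For any vector x̃ ∈ ℝⁿ with ‖x̃‖₂ ≤ 1 and ‖x̃‖₁ ≤ √k and s > 0, the 'case D' bound holds: Σ_{k∈I^{<1}} x̃ₖ⁴ (6‖x̃‖₁/(s|x̃ₖ|) + ‖x̃‖₁³/(s³|x̃ₖ|³)) ≤ 6√k/s + k²/s³, where I^{<1} = {i : s|x̃ᵢ|/‖x̃‖₁ < 1}. -/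
open scoped Classical

theorem stmt15 (n : ℕ) (x : Fin n → ℝ) (hx : x ≠ 0) (k s : ℝ) (hs : 0 < s)
    (hx2 : Real.sqrt (∑ i, (x i) ^ 2) ≤ 1)
    (hk : ∑ i, |x i| ≤ Real.sqrt k) :
    ∑ i ∈ Finset.univ.filter (fun i => s * |x i| / (∑ j, |x j|) < 1),
        (x i) ^ 4 * (6 * (∑ j, |x j|) / (s * |x i|) +
          (∑ j, |x j|) ^ 3 / (s ^ 3 * |x i| ^ 3)) ≤
      6 * Real.sqrt k / s + k ^ 2 / s ^ 3 := by
  set S := ∑ j, |x j| with hS_def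
  have hSpos : 0 < S := by
    obtain ⟨i, hi⟩ : ∃ i, x i ≠ 0 := by
      by_contra h
      push_neg at h
      exact hx (funext h)
    have := Finset.single_le_sum (f := fun j => |x j|) (fun j _ => abs_nonneg _)
      (Finset.mem_univ i)
    exact lt_of_lt_of_le (abs_pos.mpr hi) this
  have hsum2 : ∑ i, (x i) ^ 2 ≤ 1 := by
    have h0 : 0 ≤ ∑ i, (x i) ^ 2 := Finset.sum_nonneg fun i _ => sq_nonneg _
    nlinarith [Real.sq_sqrt h0, Real.sqrt_nonneg (∑ i, (x i) ^ 2)]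
  have hT : ∑ i, |x i| ^ 3 ≤ 1 := by
    refine le_trans (Finset.sum_le_sum fun i _ => ?_) hsum2
    have h1 : (x i) ^ 2 ≤ 1 :=
      le_trans (Finset.single_le_sum (f := fun j => (x j) ^ 2) (fun j _ => sq_nonneg _)
        (Finset.mem_univ i)) hsum2
    nlinarith [sq_abs (x i), abs_nonneg (x i)]
  have hkpos : 0 < k := Real.sqrt_pos.mp (lt_of_lt_of_le hSpos hk)
  have hk2 : (Real.sqrt k) ^ 2 = k := Real.sq_sqrt hkpos.le
  have key : ∀ i, (x i) ^ 4 * (6 * S / (s * |x i|) + S ^ 3 / (s ^ 3 * |x i| ^ 3)) ≤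
      6 * S * |x i| ^ 3 / s + S ^ 3 * |x i| / s ^ 3 := by
    intro i
    rcases eq_or_ne (x i) 0 with h | h
    · simp [h]
    · have ha : 0 < |x i| := abs_pos.mpr h
      have hx4 : (x i) ^ 4 = |x i| ^ 4 := by
        rw [pow_abs, abs_of_nonneg (by positivity)]
      rw [hx4]
      have heq : 6 * S * |x i| ^ 3 / s + S ^ 3 * |x i| / s ^ 3 -
          |x i| ^ 4 * (6 * S / (s * |x i|) + S ^ 3 / (s ^ 3 * |x i| ^ 3)) = 0 := by
        field_simp
        ring
      linarith [heq]
  calc ∑ i ∈ Finset.univ.filter (fun i => s * |x i| / S < 1),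
        (x i) ^ 4 * (6 * S / (s * |x i|) + S ^ 3 / (s ^ 3 * |x i| ^ 3))
      ≤ ∑ i ∈ Finset.univ.filter (fun i => s * |x i| / S < 1),
        (6 * S * |x i| ^ 3 / s + S ^ 3 * |x i| / s ^ 3) :=
        Finset.sum_le_sum fun i _ => key i
    _ ≤ ∑ i, (6 * S * |x i| ^ 3 / s + S ^ 3 * |x i| / s ^ 3) :=
        Finset.sum_le_sum_of_subset_of_nonneg (Finset.filter_subset _ _)
          (fun i _ _ => by positivity)
    _ = 6 * S / s * (∑ i, |x i| ^ 3) + S ^ 3 / s ^ 3 * S := by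
        have hrw : ∀ i : Fin n, 6 * S * |x i| ^ 3 / s + S ^ 3 * |x i| / s ^ 3 =
            6 * S / s * |x i| ^ 3 + S ^ 3 / s ^ 3 * |x i| := fun i => by ring
        rw [Finset.sum_congr rfl (fun i _ => hrw i), Finset.sum_add_distrib,
          ← Finset.mul_sum, ← Finset.mul_sum, ← hS_def]
    _ ≤ 6 * Real.sqrt k / s + k ^ 2 / s ^ 3 := by
        have hT0 : 0 ≤ ∑ i, |x i| ^ 3 := Finset.sum_nonneg fun i _ => by positivity
        have h1 : 6 * S / s * (∑ i, |x i| ^ 3) ≤ 6 * Real.sqrt k / s := by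
          have step1 : 6 * S / s * (∑ i, |x i| ^ 3) ≤ 6 * S / s * 1 :=
            mul_le_mul_of_nonneg_left hT (by positivity)
          have step2 : 6 * S / s ≤ 6 * Real.sqrt k / s := by gcongr
          linarith
        have h2 : S ^ 3 / s ^ 3 * S ≤ k ^ 2 / s ^ 3 := by
          rw [div_mul_eq_mul_div]
          have hS4 : S ^ 3 * S ≤ k ^ 2 := by nlinarith [pow_le_pow_left₀ hSpos.le hk 4, hk2]
          gcongr
        linarith
end
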